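/- arXiv:2602.14156 — 2 statements merged into one kernel-verified Lean document; each statement's English description precedes it below -/
import Mathlib

section
/- Fix t ∈ [0,∞) and x ∈ ℝ^N. Let H(t,x,·) : ℝ^N → ℝ be a real-valued convex function, let U(t) be a nonempty subset of ℝ^M, let f(t,x,·) : ℝ^M → ℝ^N be such that the set f(t,x,U(t)) is closed and convex, and let l(t,x,·) : ℝ^M → ℝ. If H(t,x,p) = sup_{u∈U(t)} (⟨p,f(t,x,u)⟩ − l(t,x,u)) for all p ∈ ℝ^N (i.e. (U,f,l) is a representation of H at (t,x)), then dom H*(t,x,·) = f(t,x,U(t)). -/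
open MeasureTheory Set Filter Topology

noncomputable section

namespace HJB

/-- `ℝ^n`. -/
abbrev Euc (n : ℕ) : Type := EuclideanSpace ℝ (Fin n)

/-! ### Legendre–Fenchel conjugate (in the last variable) -/

/-- The Legendre–Fenchel conjugate of a real-valued function on `ℝ^N`,
with values in `ℝ ∪ {±∞}` (it is never `⊥`). -/
def conj {N : ℕ} (h : Euc N → ℝ) (v : Euc N) : EReal :=
  ⨆ p : Euc N, (((inner ℝ v p : ℝ) - h p : ℝ) : EReal)

/-- The effective domain of the conjugate. -/
def domConj {N : ℕ} (h : Euc N → ℝ) : Set (Euc N) := {v | conj h v ≠ ⊤}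

/-- The epigraph of the conjugate. -/
def epiConj {N : ℕ} (h : Euc N → ℝ) : Set (Euc N × ℝ) :=
  {q | conj h q.1 ≤ (q.2 : EReal)}

/-- The graph of the conjugate. -/
def gphConj {N : ℕ} (h : Euc N → ℝ) : Set (Euc N × ℝ) :=
  {q | conj h q.1 = (q.2 : EReal)}

/-- `H*(t,x,v)`, the conjugate of a Hamiltonian in the last variable. -/
def Hstar {N : ℕ} (H : ℝ → Euc N → Euc N → ℝ) (t : ℝ) (x v : Euc N) : EReal :=
  conj (H t x) v

/-! ### Integrability classes -/

/-- `φ ∈ L¹([0,∞);ℝ)`. -/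
def MemL1 (φ : ℝ → ℝ) : Prop := IntegrableOn φ (Ici 0)

/-- `c ∈ L¹_loc([0,∞);[0,∞))`. -/
def MemL1loc (c : ℝ → ℝ) : Prop :=
  (∀ t, 0 ≤ c t) ∧ ∀ b : ℝ, IntegrableOn c (Icc 0 b)

/-- The class `𝓛_loc` : nonnegative, locally integrable on `[0,∞)`, with uniformly
small integrals over short subintervals. -/
def MemLloc (k : ℝ → ℝ) : Prop :=
  MemL1loc k ∧ ∀ ε > (0:ℝ), ∃ σ > (0:ℝ), ∀ a b : ℝ, 0 ≤ a → a ≤ b → b - a ≤ σ →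
    (∫ τ in a..b, k τ) ≤ ε

/-! ### Cones -/

/-- The Bouligand tangent cone `T_A(x) = {ζ : liminf_{τ→0+} dist(x+τζ,A)/τ = 0}`. -/
def tangentConeB {F : Type*} [NormedAddCommGroup F] [NormedSpace ℝ F]
    (A : Set F) (x : F) : Set F :=
  {ζ | ∀ ε > (0:ℝ), ∀ δ > (0:ℝ), ∃ τ : ℝ, 0 < τ ∧ τ < δ ∧
    Metric.infDist (x + τ • ζ) A ≤ ε * τ}

/-- The regular normal cone (polar of the tangent cone). -/
def regNormal {N : ℕ} (A : Set (Euc N)) (x : Euc N) : Set (Euc N) :=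
  {ξ | ∀ ζ ∈ tangentConeB A x, (inner ℝ ζ ξ : ℝ) ≤ 0}

/-- The limiting normal cone. -/
def limNormal {N : ℕ} (A : Set (Euc N)) (x : Euc N) : Set (Euc N) :=
  {ξ | ∃ xs ξs : ℕ → Euc N, (∀ n, xs n ∈ A ∧ ξs n ∈ regNormal A (xs n)) ∧
    Tendsto xs atTop (nhds x) ∧ Tendsto ξs atTop (nhds ξ)}

/-- The set `N¹_{y,η}` of unit vectors in closed convex hulls of limiting normal
cones at boundary points near `y`. -/
def N1set {N : ℕ} (A : Set (Euc N)) (y : Euc N) (η : ℝ) : Set (Euc N) :=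
  {n | ‖n‖ = 1 ∧ ∃ x ∈ frontier A ∩ Metric.closedBall y η,
    n ∈ closure (convexHull ℝ (limNormal A x))}

/-- The outward pointing condition (OPC) for a set-valued velocity map `FF`. -/
def OPC {N : ℕ} (A : Set (Euc N)) (FF : ℝ → Euc N → Set (Euc N)) : Prop :=
  ∃ η > (0:ℝ), ∃ r > (0:ℝ), ∃ Mc : ℝ, 0 ≤ Mc ∧
    ∀ᵐ t ∂(volume.restrict (Ici (0:ℝ))), ∀ y : Euc N,
      (∃ z ∈ frontier A, dist y z ≤ η) →
      ∀ v ∈ FF t y, (∀ ε > (0:ℝ), ∃ n ∈ N1set A y η, (inner ℝ n v : ℝ) ≤ ε) →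
        ∃ w ∈ FF t y, dist w v ≤ Mc ∧
          ∀ n ∈ N1set A y η, r ≤ (inner ℝ n w : ℝ) ∧ r ≤ (inner ℝ n (w - v) : ℝ)

/-- `(OPC)_H` : the OPC condition for `dom H*`. -/
def OPCH {N : ℕ} (H : ℝ → Euc N → Euc N → ℝ) (A : Set (Euc N)) : Prop :=
  OPC A (fun t y => domConj (H t y))

/-! ### Conditions (h)'' and (h)''_H -/

/-- The image set `(f,l)(t,x,U(t))`. -/
def flimg {N M : ℕ} (U : ℝ → Set (Euc M)) (f : ℝ → Euc N → Euc M → Euc N)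
    (l : ℝ → Euc N → Euc M → ℝ) (t : ℝ) (x : Euc N) : Set (Euc N × ℝ) :=
  (fun u => (f t x u, l t x u)) '' U t

/-- Condition (h)'' for a control triple `(U,f,l)`, a constraint set `A`, and
data functions `φ ∈ L¹`, `c ∈ L¹_loc`, `k, q ∈ 𝓛_loc`. -/
def Hpp {N M : ℕ} (U : ℝ → Set (Euc M)) (f : ℝ → Euc N → Euc M → Euc N)
    (l : ℝ → Euc N → Euc M → ℝ) (A : Set (Euc N)) (φ c k q : ℝ → ℝ) : Prop :=
  (∀ O : Set (Euc M), IsOpen O → MeasurableSet {t : ℝ | (U t ∩ O).Nonempty}) ∧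
  (∀ t, (U t).Nonempty ∧ IsClosed (U t)) ∧
  -- (h1)
  (∀ x u, Measurable fun t => f t x u) ∧
  (∀ x u, Measurable fun t => l t x u) ∧
  (∀ t, Continuous fun q : Euc N × Euc M => f t q.1 q.2) ∧
  (∀ t, Continuous fun q : Euc N × Euc M => l t q.1 q.2) ∧
  MemL1 φ ∧ (∀ t, 0 ≤ t → ∀ x u, φ t ≤ l t x u) ∧
  -- (h2)
  MemL1loc c ∧
  (∀ t, 0 ≤ t → ∀ x, ∀ u ∈ U t, ‖f t x u‖ + |l t x u| ≤ c t * (1 + ‖x‖)) ∧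
  -- (h3)
  (∀ t, 0 ≤ t → ∀ x, IsClosed (flimg U f l t x) ∧
    Tendsto (fun y => EMetric.hausdorffEdist (flimg U f l t y) (flimg U f l t x))
      (nhds x) (nhds 0)) ∧
  -- (h4)
  (∀ t, 0 ≤ t → ∀ x, Convex ℝ {y : Euc N × ℝ |
    ∃ u ∈ U t, ∃ r : ℝ, 0 ≤ r ∧ y = (f t x u, l t x u + r)}) ∧
  -- (h5)
  MemLloc q ∧
  (∀ t, 0 ≤ t → ∀ x ∈ frontier A, ∀ u ∈ U t, ‖f t x u‖ + |l t x u| ≤ q t) ∧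
  -- (h6)
  MemLloc k ∧
  (∀ t, 0 ≤ t → ∀ x y, ∀ u ∈ U t,
    ‖f t x u - f t y u‖ + |l t x u - l t y u| ≤ k t * ‖x - y‖)

/-- Condition (h)''_H for a Hamiltonian `H`, a constraint set `A`, a function `λ`,
and data functions `φ ∈ L¹`, `c ∈ L¹_loc`, `k, q ∈ 𝓛_loc`. -/
def HppH {N : ℕ} (H : ℝ → Euc N → Euc N → ℝ) (A : Set (Euc N))
    (lam : ℝ → Euc N → ℝ) (φ c k q : ℝ → ℝ) : Prop :=
  -- (H1)
  (∀ x p, Measurable fun t => H t x p) ∧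
  (∀ t p, Continuous fun x => H t x p) ∧
  (∀ t x, ConvexOn ℝ univ (H t x)) ∧
  -- (H2)
  MemL1 φ ∧ (∀ t, 0 ≤ t → ∀ x, H t x 0 ≤ -φ t) ∧
  -- regularity of λ and of the data
  (∀ t x, 0 ≤ lam t x) ∧
  (∀ x, Measurable fun t => lam t x) ∧
  (∀ t, Continuous fun x => lam t x) ∧
  MemL1loc c ∧ MemLloc k ∧ MemLloc q ∧
  -- (H3)
  (∀ t, 0 ≤ t → ∀ x, lam t x ≤ c t * (1 + ‖x‖)) ∧
  (∀ t, 0 ≤ t → ∀ x ∈ frontier A, lam t x ≤ q t) ∧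
  -- (H4)
  (∀ t, 0 ≤ t → ∀ x y, |lam t x - lam t y| ≤ k t * ‖x - y‖) ∧
  -- (H5)
  (∀ t, 0 ≤ t → ∀ x y p, |H t x p - H t y p| ≤ k t * (1 + ‖p‖) * ‖x - y‖) ∧
  -- (H6)
  (∀ t, 0 ≤ t → ∀ x p p', |H t x p - H t x p'| ≤ lam t x * ‖p - p'‖) ∧
  -- (H7)
  (∀ t, 0 ≤ t → ∀ x v, Hstar H t x v ≠ ⊤ → |(Hstar H t x v).toReal| ≤ lam t x)

/-! ### Trajectories and value functions -/

/-- `x` is locally absolutely continuous on `[t₀,∞)` with a.e. derivative `dx`. -/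
def IsTrajOn {N : ℕ} (x dx : ℝ → Euc N) (t₀ : ℝ) : Prop :=
  (∀ b : ℝ, IntegrableOn dx (Icc t₀ b)) ∧
  ∀ t, t₀ ≤ t → x t = x t₀ + ∫ s in t₀..t, dx s

/-- `S_H(t₀,x₀)` : admissible pairs (trajectory, a.e. derivative) for the
calculus-of-variations problem with constraint set `A`. -/
def SH {N : ℕ} (H : ℝ → Euc N → Euc N → ℝ) (A : Set (Euc N)) (t₀ : ℝ)
    (x₀ : Euc N) : Set ((ℝ → Euc N) × (ℝ → Euc N)) :=
  {p | IsTrajOn p.1 p.2 t₀ ∧ p.1 t₀ = x₀ ∧ (∀ t, t₀ ≤ t → p.1 t ∈ A) ∧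
    ∀ᵐ t ∂(volume.restrict (Ici t₀)), Hstar H t (p.1 t) (p.2 t) ≠ ⊤}

open Classical in
/-- The cost `∫_{t₀}^∞ H*(t,x(t),ẋ(t)) dt ∈ ℝ ∪ {+∞}` of a trajectory. -/
def trajCost {N : ℕ} (H : ℝ → Euc N → Euc N → ℝ) (t₀ : ℝ)
    (p : (ℝ → Euc N) × (ℝ → Euc N)) : EReal :=
  if (∀ᵐ t ∂(volume.restrict (Ici t₀)), Hstar H t (p.1 t) (p.2 t) ≠ ⊤) ∧
     IntegrableOn (fun t => (Hstar H t (p.1 t) (p.2 t)).toReal) (Ici t₀)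
  then (((∫ t in Ici t₀, (Hstar H t (p.1 t) (p.2 t)).toReal) : ℝ) : EReal)
  else ⊤

/-- The value function `V` of the calculus-of-variations problem. -/
def valueV {N : ℕ} (H : ℝ → Euc N → Euc N → ℝ) (A : Set (Euc N)) (t₀ : ℝ)
    (x₀ : Euc N) : EReal :=
  sInf (trajCost H t₀ '' SH H A t₀ x₀)

/-- `S_f(t₀,x₀)` : admissible trajectory-control pairs of the control system. -/
def Sf {N M : ℕ} (U : ℝ → Set (Euc M)) (f : ℝ → Euc N → Euc M → Euc N)
    (A : Set (Euc N)) (t₀ : ℝ) (x₀ : Euc N) :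
    Set ((ℝ → Euc N) × (ℝ → Euc M)) :=
  {p | Measurable p.2 ∧ (∀ᵐ t ∂(volume.restrict (Ici t₀)), p.2 t ∈ U t) ∧
    (∀ b : ℝ, IntegrableOn (fun s => f s (p.1 s) (p.2 s)) (Icc t₀ b)) ∧
    p.1 t₀ = x₀ ∧ (∀ t, t₀ ≤ t → p.1 t ∈ A) ∧
    ∀ t, t₀ ≤ t → p.1 t = x₀ + ∫ s in t₀..t, f s (p.1 s) (p.2 s)}

open Classical in
/-- The cost `∫_{t₀}^∞ l(t,x(t),u(t)) dt ∈ ℝ ∪ {+∞}` of a trajectory-control pair. -/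
def ctrlCost {N M : ℕ} (l : ℝ → Euc N → Euc M → ℝ) (t₀ : ℝ)
    (p : (ℝ → Euc N) × (ℝ → Euc M)) : EReal :=
  if IntegrableOn (fun t => l t (p.1 t) (p.2 t)) (Ici t₀)
  then (((∫ t in Ici t₀, l t (p.1 t) (p.2 t)) : ℝ) : EReal)
  else ⊤

/-- The value function `𝒱` of the optimal control problem. -/
def valueVc {N M : ℕ} (U : ℝ → Set (Euc M)) (f : ℝ → Euc N → Euc M → Euc N)
    (l : ℝ → Euc N → Euc M → ℝ) (A : Set (Euc N)) (t₀ : ℝ) (x₀ : Euc N) : EReal :=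
  sInf (ctrlCost l t₀ '' Sf U f A t₀ x₀)

/-! ### Conditions (B), (B)_H, (LB), (VIC) -/

/-- Condition `(B)_H`. -/
def CondBH {N : ℕ} (H : ℝ → Euc N → Euc N → ℝ) (A : Set (Euc N)) : Prop :=
  (∃ t₀ ≥ (0:ℝ), ∃ x₀ ∈ A, valueV H A t₀ x₀ ≠ ⊤) ∧
  ∃ T > (0:ℝ), ∃ ψ : ℝ → ℝ, (∀ t, 0 ≤ ψ t) ∧ IntegrableOn ψ (Ici T) ∧
    ∀ t₀, T ≤ t₀ → ∀ x₀ ∈ A, valueV H A t₀ x₀ ≠ ⊤ →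
      ∀ p ∈ SH H A t₀ x₀,
        ∀ᵐ t ∂(volume.restrict (Ici t₀)), |(Hstar H t (p.1 t) (p.2 t)).toReal| ≤ ψ t

/-- Condition `(B)`. -/
def CondB {N M : ℕ} (U : ℝ → Set (Euc M)) (f : ℝ → Euc N → Euc M → Euc N)
    (l : ℝ → Euc N → Euc M → ℝ) (A : Set (Euc N)) (T : ℝ) (ψ : ℝ → ℝ) : Prop :=
  (∃ t₀ ≥ (0:ℝ), ∃ x₀ ∈ A, valueVc U f l A t₀ x₀ ≠ ⊤) ∧
  0 < T ∧ (∀ t, 0 ≤ ψ t) ∧ IntegrableOn ψ (Ici T) ∧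
    ∀ t₀, T ≤ t₀ → ∀ x₀ ∈ A, valueVc U f l A t₀ x₀ ≠ ⊤ →
      ∀ p ∈ Sf U f A t₀ x₀,
        ∀ᵐ t ∂(volume.restrict (Ici t₀)), |l t (p.1 t) (p.2 t)| ≤ ψ t

/-- Condition (LB), with the family `ψ r` of integrable bounds. -/
def CondLB {N M : ℕ} (U : ℝ → Set (Euc M)) (f : ℝ → Euc N → Euc M → Euc N)
    (l : ℝ → Euc N → Euc M → ℝ) (A : Set (Euc N)) (ψ : ℝ → ℝ → ℝ) : Prop :=
  ∀ r, 0 < r → (∀ t, 0 ≤ ψ r t) ∧ IntegrableOn (ψ r) (Ici 0) ∧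
    ∀ t₀, 0 ≤ t₀ → ∀ x₀ ∈ A, ‖x₀‖ ≤ r → ∀ p ∈ Sf U f A t₀ x₀,
      ∀ᵐ t ∂(volume.restrict (Ici t₀)), |l t (p.1 t) (p.2 t)| ≤ ψ r t

/-- Condition `(VIC)_H`. -/
def VICH {N : ℕ} (H : ℝ → Euc N → Euc N → ℝ) (A : Set (Euc N)) : Prop :=
  ∃ C : Set ℝ, C ⊆ Ioi 0 ∧ volume (Ioi 0 \ C) = 0 ∧
    ∀ t ∈ C, ∀ x ∈ A,
      (∃ v, Hstar H t x v ≠ ⊤ ∧ v ∈ tangentConeB A x) ∧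
      ∀ v, Hstar H t x v ≠ ⊤ → -v ∈ tangentConeB A x

/-- Condition (VIC) for a dynamics `f` with controls `U`. -/
def VICf {N M : ℕ} (U : ℝ → Set (Euc M)) (f : ℝ → Euc N → Euc M → Euc N)
    (A : Set (Euc N)) : Prop :=
  ∃ C : Set ℝ, C ⊆ Ioi 0 ∧ volume (Ioi 0 \ C) = 0 ∧
    ∀ t ∈ C, ∀ x ∈ A,
      (∃ u ∈ U t, f t x u ∈ tangentConeB A x) ∧
      ∀ u ∈ U t, -(f t x u) ∈ tangentConeB A x

/-! ### Weak solutions -/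

/-- The time–state–value space `ℝ × ℝ^N × ℝ`. -/
abbrev TXR (N : ℕ) : Type := ℝ × Euc N × ℝ

/-- The natural pairing on `ℝ × ℝ^N × ℝ`. -/
def pairTX {N : ℕ} (p q : TXR N) : ℝ :=
  p.1 * q.1 + (inner ℝ p.2.1 q.2.1 : ℝ) + p.2.2 * q.2.2

/-- The regular normal cone in `ℝ × ℝ^N × ℝ` (polar of the tangent cone). -/
def regNormalTX {N : ℕ} (S : Set (TXR N)) (z : TXR N) : Set (TXR N) :=
  {ξ | ∀ ζ ∈ tangentConeB S z, pairTX ζ ξ ≤ 0}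

/-- The epigraph of an extended-real function of `(t,x)`. -/
def epiTX {N : ℕ} (W : ℝ → Euc N → EReal) : Set (TXR N) :=
  {z | W z.1 z.2.1 ≤ (z.2.2 : EReal)}

/-- The epigraph of `W(t,·)`. -/
def epiX {N : ℕ} (W : ℝ → Euc N → EReal) (t : ℝ) : Set (Euc N × ℝ) :=
  {q | W t q.1 ≤ (q.2 : EReal)}

/-- The Fréchet subdifferential of `W` at `(t,x)` (only meaningful when `W t x` is finite). -/
def frSubdiff {N : ℕ} (W : ℝ → Euc N → EReal) (t : ℝ) (x : Euc N) :
    Set (ℝ × Euc N) :=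
  {p | ∀ ε > (0:ℝ), ∃ δ > (0:ℝ), ∀ s : ℝ, ∀ y : Euc N,
    dist ((s, y) : ℝ × Euc N) (t, x) < δ →
    ((((W t x).toReal + p.1 * (s - t) + (inner ℝ p.2 (y - x) : ℝ)
      - ε * dist ((s, y) : ℝ × Euc N) (t, x)) : ℝ) : EReal) ≤ W s y}

/-- A lower semicontinuous `W : [0,∞) × A → ℝ ∪ {+∞}` is a weak solution of
`-W_t + H(t,x,-W_x) = 0` on `(0,∞) × A`. -/
def IsWeakSolution {N : ℕ} (H : ℝ → Euc N → Euc N → ℝ) (A : Set (Euc N))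
    (W : ℝ → Euc N → EReal) : Prop :=
  ∃ C : Set ℝ, C ⊆ Ioi 0 ∧ volume (Ioi 0 \ C) = 0 ∧
    (∀ t ∈ C, ∀ x ∈ frontier A, W t x ≠ ⊤ →
      (∀ p ∈ frSubdiff W t x, 0 ≤ -p.1 + H t x (-p.2)) ∧
      (∀ pt : ℝ, ∀ px : Euc N,
        ((pt, px, (0:ℝ)) : TXR N) ∈ regNormalTX (epiTX W) (t, x, (W t x).toReal) →
        ∀ ε > (0:ℝ), ∃ v : Euc N, Hstar H t x v ≠ ⊤ ∧ pt - ε ≤ (inner ℝ v (-px) : ℝ))) ∧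
    (∀ t ∈ C, ∀ x ∈ interior A, W t x ≠ ⊤ →
      (∀ p ∈ frSubdiff W t x, -p.1 + H t x (-p.2) = 0) ∧
      (∀ pt : ℝ, ∀ px : Euc N,
        ((pt, px, (0:ℝ)) : TXR N) ∈ regNormalTX (epiTX W) (t, x, (W t x).toReal) →
        IsLUB {r : ℝ | ∃ v : Euc N, Hstar H t x v ≠ ⊤ ∧ r = (inner ℝ v (-px) : ℝ)} pt))

/-- Local absolute continuity of a set-valued map `t ⇝ P(t)` with nonempty closed
values. -/
def LocAbsCont {F : Type*} [MetricSpace F] (P : ℝ → Set F) : Prop :=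
  (∀ t, 0 ≤ t → (P t).Nonempty ∧ IsClosed (P t)) ∧
  ∀ S T : ℝ, 0 ≤ S → S ≤ T → ∀ ε > (0:ℝ), ∀ K : Set F, IsCompact K →
    ∃ δ > (0:ℝ), ∀ m : ℕ, ∀ s t : ℕ → ℝ,
      (∀ i, i < m → S ≤ s i ∧ s i < t i ∧ t i ≤ T) →
      (∀ i, i + 1 < m → t i ≤ s (i + 1)) →
      (∑ i ∈ Finset.range m, (t i - s i)) < δ →
      ∃ e : ℕ → ℝ,
        (∀ i, i < m → 0 ≤ e i ∧
          (P (t i) ∩ K ⊆ {y | ∃ z ∈ P (s i), dist y z ≤ e i}) ∧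
          (P (s i) ∩ K ⊆ {y | ∃ z ∈ P (t i), dist y z ≤ e i})) ∧
        (∑ i ∈ Finset.range m, e i) < ε

/-! ### The class 𝓗 -/

/-- The rescaled Hamiltonian `IH(t,x,p) := θ(t)⁻¹ H(t,x,θ(t)p)`. -/
def IHam {N : ℕ} (H : ℝ → Euc N → Euc N → ℝ) (θ : ℝ → ℝ) :
    ℝ → Euc N → Euc N → ℝ :=
  fun t x p => (θ t)⁻¹ * H t x (θ t • p)

/-- The `L^∞([0,∞))` norm. -/
def supNormInfty (θ : ℝ → ℝ) : ℝ :=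
  (essSup (fun t => ENNReal.ofReal |θ t|) (volume.restrict (Ici (0:ℝ)))).toReal


/-- The class `𝓗(θ,λ,{ψ_r},φ,c,A)`. -/
def ClassH {N : ℕ} (H : ℝ → Euc N → Euc N → ℝ) (θ : ℝ → ℝ)
    (lam : ℝ → Euc N → ℝ) (ψ : ℝ → ℝ → ℝ) (φ c : ℝ → ℝ) (A : Set (Euc N)) : Prop :=
  (∀ t, 0 < θ t) ∧ Measurable θ ∧
  essSup (fun t => ENNReal.ofReal |θ t|) (volume.restrict (Ici (0:ℝ))) ≠ ⊤ ∧
  (∀ r, 0 < r → (∀ t, 0 ≤ ψ r t) ∧ IntegrableOn (ψ r) (Ici 0)) ∧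
  (∃ k q : ℝ → ℝ, HppH (IHam H θ) A lam φ c k q) ∧
  ∀ r, 0 < r → ∀ t₀, 0 ≤ t₀ → ∀ x₀ ∈ A, ‖x₀‖ ≤ r →
    ∀ p ∈ SH (IHam H θ) A t₀ x₀,
      ∀ᵐ t ∂(volume.restrict (Ici t₀)), θ t * lam t (p.1 t) ≤ ψ r t

/-
Each `u ∈ U` gives the affine minorant `p ↦ ⟪p, f u⟫ - l u` of `h`, so `h*(f u) ≤ l u`.
Conversely, if `v ∉ f(U)`, separate `v` from the closed convex set `f(U)` by some `p`,
so that `⟪p, f u⟫ ≤ c < ⟪p, v⟫` on `U`. Then `h (t • p) ≤ t * c + h 0` for `t ≥ 0`, while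
`⟪v, t • p⟫` grows like `t * ⟪p, v⟫`, hence `h*(v) = +∞`.
-/

section Conjugate

variable {N : ℕ} {h : Euc N → ℝ}

theorem conj_le_coe_iff {v : Euc N} {b : ℝ} :
    conj h v ≤ b ↔ ∀ p, inner ℝ v p - h p ≤ b := by
  simp only [conj, iSup_le_iff, EReal.coe_le_coe_iff]

theorem mem_domConj_iff_bddAbove {v : Euc N} :
    v ∈ domConj h ↔ BddAbove (range fun p => inner ℝ v p - h p) := by
  simp only [domConj, mem_ofPred_eq, bddAbove_def, forall_mem_range, ← conj_le_coe_iff]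
  refine ⟨fun hv => ⟨(conj h v).toReal, EReal.le_coe_toReal hv⟩, fun ⟨b, hb⟩ => ?_⟩
  exact ne_top_of_le_ne_top (EReal.coe_ne_top b) hb

theorem notMem_domConj_of_apply_smul_le {v p : Euc N} {a c : ℝ}
    (hgrowth : ∀ t : ℝ, 0 ≤ t → h (t • p) ≤ t * c + a) (hc : c < inner ℝ v p) :
    v ∉ domConj h := by
  rw [mem_domConj_iff_bddAbove]
  rintro ⟨b, hb⟩
  obtain ⟨t, ht, hbt⟩ := exists_pos_lt_mul (sub_pos.2 hc) (b + a)
  have hbound : inner ℝ v (t • p) - h (t • p) ≤ b := hb ⟨t • p, rfl⟩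
  rw [real_inner_smul_right] at hbound
  linarith [hgrowth t ht.le]

end Conjugate

def IsRepresentation {N M : ℕ} (h : Euc N → ℝ) (U : Set (Euc M)) (f : Euc M → Euc N)
    (l : Euc M → ℝ) : Prop :=
  ∀ p, IsLUB {r : ℝ | ∃ u ∈ U, r = inner ℝ p (f u) - l u} (h p)

namespace IsRepresentation

variable {N M : ℕ} {h : Euc N → ℝ} {U : Set (Euc M)} {f : Euc M → Euc N} {l : Euc M → ℝ}

theorem inner_sub_le (hrep : IsRepresentation h U f l) {u : Euc M} (hu : u ∈ U) (p : Euc N) :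
    inner ℝ p (f u) - l u ≤ h p :=
  (hrep p).1 ⟨u, hu, rfl⟩

theorem conj_le (hrep : IsRepresentation h U f l) {u : Euc M} (hu : u ∈ U) :
    conj h (f u) ≤ l u :=
  conj_le_coe_iff.2 fun p => by
    rw [real_inner_comm]
    linarith [hrep.inner_sub_le hu p]

theorem image_subset_domConj (hrep : IsRepresentation h U f l) : f '' U ⊆ domConj h := by
  rintro _ ⟨u, hu, rfl⟩
  exact ne_top_of_le_ne_top (EReal.coe_ne_top _) (hrep.conj_le hu)

theorem apply_smul_le (hrep : IsRepresentation h U f l) {p : Euc N} {c : ℝ}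
    (hc : ∀ u ∈ U, inner ℝ p (f u) ≤ c) {t : ℝ} (ht : 0 ≤ t) :
    h (t • p) ≤ t * c + h 0 := by
  refine (hrep (t • p)).2 ?_
  rintro _ ⟨u, hu, rfl⟩
  have hl : inner ℝ (0 : Euc N) (f u) - l u ≤ h 0 := hrep.inner_sub_le hu 0
  rw [inner_zero_left] at hl
  rw [real_inner_smul_left]
  nlinarith [hc u hu]

theorem domConj_subset_image (hrep : IsRepresentation h U f l) (hcl : IsClosed (f '' U))
    (hcv : Convex ℝ (f '' U)) : domConj h ⊆ f '' U := by
  intro v hv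
  by_contra hvU
  obtain ⟨φ, c, hφU, hφv⟩ := geometric_hahn_banach_closed_point hcv hcl hvU
  set p := (InnerProductSpace.toDual ℝ (Euc N)).symm φ
  have hpU : ∀ u ∈ U, inner ℝ p (f u) ≤ c := fun u hu => by
    rw [InnerProductSpace.toDual_symm_apply]
    exact (hφU _ (mem_image_of_mem f hu)).le
  have hpv : c < inner ℝ v p := by
    rwa [real_inner_comm, InnerProductSpace.toDual_symm_apply]
  exact notMem_domConj_of_apply_smul_le (fun t ht => hrep.apply_smul_le hpU ht) hpv hv

end IsRepresentation

theorem stmt_0_general {N M : ℕ} (h : Euc N → ℝ)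
    (U : Set (Euc M))
    (f : Euc M → Euc N) (l : Euc M → ℝ)
    (hcl : IsClosed (f '' U)) (hcv : Convex ℝ (f '' U))
    (hrep : ∀ p : Euc N,
      IsLUB {r : ℝ | ∃ u ∈ U, r = (inner ℝ p (f u) : ℝ) - l u} (h p)) :
    domConj h = f '' U :=
  (IsRepresentation.domConj_subset_image hrep hcl hcv).antisymm
    (IsRepresentation.image_subset_domConj hrep)

/-- Lemma `rep-rde`. If `(U,f,l)` is a representation of the
real-valued convex function `h = H(t,x,·)` and `f(t,x,U(t))` is closed and convex,
then `dom H*(t,x,·) = f(t,x,U(t))`. -/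
theorem stmt_0 {N M : ℕ} (h : Euc N → ℝ) (hconv : ConvexOn ℝ univ h)
    (U : Set (Euc M)) (hU : U.Nonempty)
    (f : Euc M → Euc N) (l : Euc M → ℝ)
    (hcl : IsClosed (f '' U)) (hcv : Convex ℝ (f '' U))
    (hrep : ∀ p : Euc N,
      IsLUB {r : ℝ | ∃ u ∈ U, r = (inner ℝ p (f u) : ℝ) - l u} (h p)) :
    domConj h = f '' U :=
  stmt_0_general h U f l hcl hcv hrep

end HJB
end
end

section
/- Assume A ⊆ ℝ^N is nonempty and closed, U : [0,∞) ⇝ ℝ^M is measurable with nonempty closed images, H : [0,∞)×ℝ^N×ℝ^N → ℝ is measurable in t, continuous in x, convex in p, and H(t,x,0) ≤ −φ(t) for some φ ∈ L¹([0,∞);ℝ); and f, l are Lebesgue measurable in t, continuous in (x,u), with l(t,x,u) ≥ φ(t) for all t,x,u. If (U,f,l) is an epigraphical representation of H, then the value functions V and 𝒱 are well-defined and V(t₀,x₀) = 𝒱(t₀,x₀) for all (t₀,x₀) ∈ [0,∞)×A. Moreover, if x̄ is an optimal trajectory of V at (t₀,x₀) ∈ dom V, then there exists a measurable ū such that (x̄,ū)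 is an optimal pair of 𝒱 at (t₀,x₀); conversely, if (x̄,ū) is an optimal pair of 𝒱 at (t₀,x₀) ∈ dom 𝒱, then x̄ is an optimal trajectory of V at (t₀,x₀). -/
open MeasureTheory Set Filter Topology

noncomputable section

/-! The two problems are compared pointwise in time. Along an admissible pair `(x, u)` the point
`(f(t,x,u), l(t,x,u))` lies in `epi H*(t,x,·)`, so `x` is admissible for `V` at no larger cost
(integrability of `H*` along `x` follows from `φ ≤ -H(t,x,0) ≤ H* ≤ l`). Conversely, along a
finite-cost trajectory, `(ẋ, H*(t,x,ẋ))` lies in `gph H*(t,x,·) ⊆ (f,l)(t,x,U(t))`, and a control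
realizing it is a measurable zero of the Carathéodory function
`u ↦ |f(t,x,u) - ẋ| + |l(t,x,u) - H*| + dist(u, U(t))`. Measurable zeros of nonnegative
Carathéodory functions are selected on balls as lexicographic minima, one coordinate `j` at a
time, the minimum of `u_j` over the zeros in a compact `K` being the measurable penalty limit
`sup_n min_K (u_j + n G(t,u))`. -/

open TopologicalSpace

section Caratheodory

variable {α X : Type*} [MeasurableSpace α]

theorem measurable_comp_of_caratheodory [TopologicalSpace X] [MetrizableSpace X]
    [MeasurableSpace X] [SecondCountableTopology X] [OpensMeasurableSpace X]
    {Y : Type*} [TopologicalSpace Y] [PseudoMetrizableSpace Y] [MeasurableSpace Y] [BorelSpace Y]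
    {F : α → X → Y} (hm : ∀ x, Measurable fun t => F t x) (hc : ∀ t, Continuous (F t))
    {x : α → X} (hx : Measurable x) : Measurable fun t => F t (x t) :=
  (measurable_uncurry_of_continuous_of_measurable (u := fun x t => F t x) hc hm).comp
    (hx.prodMk measurable_id)

theorem aemeasurable_comp_of_caratheodory [TopologicalSpace X] [MetrizableSpace X]
    [MeasurableSpace X] [SecondCountableTopology X] [OpensMeasurableSpace X]
    {Y : Type*} [TopologicalSpace Y] [PseudoMetrizableSpace Y] [MeasurableSpace Y] [BorelSpace Y]
    {F : α → X → Y} (hm : ∀ x, Measurable fun t => F t x) (hc : ∀ t, Continuous (F t))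
    {μ : Measure α} {x : α → X} (hx : AEMeasurable x μ) : AEMeasurable (fun t => F t (x t)) μ :=
  (measurable_uncurry_of_continuous_of_measurable (u := fun x t => F t x) hc hm).comp_aemeasurable
    (hx.prodMk aemeasurable_id)

theorem measurable_iInf_of_caratheodory [TopologicalSpace X] [SecondCountableTopology X]
    {F : α → X → ℝ} (hm : ∀ x, Measurable fun t => F t x) (hc : ∀ t, Continuous (F t))
    (K : Set X) : Measurable fun t => ⨅ x : K, F t x := by
  rcases K.eq_empty_or_nonempty with rfl | hK
  · simp
  have : Nonempty K := hK.to_subtype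
  obtain ⟨d, hd⟩ := exists_dense_seq K
  have hseq : ∀ t, ⨅ x : K, F t x = ⨅ i, F t (d i) := fun t =>
    (hd.ciInf' (f := fun x : K => F t x) ((hc t).comp continuous_subtype_val)).symm.trans
      (rangeFactorization_surjective.iInf_comp fun s : range d => F t s.1.1).symm
  simp_rw [hseq]
  exact .iInf fun i => hm _

theorem IsCompact.exists_zero_eq_iSup_penalty [TopologicalSpace X] [FirstCountableTopology X]
    {K : Set X} (hK : IsCompact K) {φ g : X → ℝ} (hφ : Continuous φ) (hg : Continuous g)
    (hg0 : ∀ x, 0 ≤ g x) (hZ : ∃ u ∈ K, g u = 0) :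
    ∃ u ∈ K, g u = 0 ∧ φ u = ⨆ n : ℕ, ⨅ x : K, (φ x + n * g x) := by
  obtain ⟨v, hvK, hv0⟩ := hZ
  have : Nonempty K := ⟨⟨v, hvK⟩⟩
  obtain ⟨C, hC⟩ : BddBelow (φ '' K) := hK.bddBelow_image hφ.continuousOn
  choose w hwK hwmin using fun n : ℕ =>
    hK.exists_isMinOn ⟨v, hvK⟩ (hφ.add (continuous_const.mul hg)).continuousOn
  have hinf : ∀ n : ℕ, ⨅ x : K, (φ x + n * g x) = φ (w n) + n * g (w n) := fun n => by
    refine le_antisymm (ciInf_le (f := fun x : K => φ x + n * g x) ⟨C, ?_⟩ ⟨w n, hwK n⟩)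
      (le_ciInf fun x => hwmin n x.2)
    rintro - ⟨x, rfl⟩
    nlinarith [hC ⟨x, x.2, rfl⟩, hg0 x, (n.cast_nonneg : (0 : ℝ) ≤ n)]
  set c := ⨆ n : ℕ, ⨅ x : K, (φ x + n * g x)
  have hc_le : ∀ u ∈ K, g u = 0 → c ≤ φ u := fun u hu hu0 =>
    ciSup_le fun n => by simpa [hinf, hu0] using hwmin n hu
  have hw_le : ∀ n : ℕ, φ (w n) + n * g (w n) ≤ c := fun n => by
    rw [← hinf n]
    refine le_ciSup (f := fun m : ℕ => ⨅ x : K, (φ x + m * g x)) ⟨φ v, ?_⟩ n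
    rintro - ⟨m, rfl⟩
    simpa [hinf, hv0] using hwmin m hvK
  obtain ⟨u, huK, ψ, hψ, hlim⟩ := hK.tendsto_subseq hwK
  have hgw : Tendsto (fun n => g (w n)) atTop (𝓝 0) := by
    refine squeeze_zero' (.of_forall fun n => hg0 _) (g := fun n : ℕ => (c - C) / n) ?_
      (tendsto_const_div_atTop_nhds_zero_nat _)
    filter_upwards [eventually_gt_atTop 0] with n hn
    rw [le_div_iff₀ (by exact_mod_cast hn)]
    linarith [hw_le n, hC ⟨w n, hwK n, rfl⟩]
  have hgu : g u = 0 :=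
    tendsto_nhds_unique ((hg.tendsto u).comp hlim) (hgw.comp hψ.tendsto_atTop)
  have hφu : φ u ≤ c := le_of_tendsto ((hφ.tendsto u).comp hlim) (.of_forall fun k => by
    simp only [Function.comp_apply]
    nlinarith [hw_le (ψ k), hg0 (w (ψ k)), ((ψ k).cast_nonneg : (0 : ℝ) ≤ ψ k)])
  exact ⟨u, huK, hgu, le_antisymm hφu (hc_le u huK hgu)⟩

theorem exists_measurable_eq_on_zeros [TopologicalSpace X] [SecondCountableTopology X]
    {G : α → X → ℝ} (hm : ∀ x, Measurable fun t => G t x) (hc : ∀ t, Continuous (G t))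
    (hG0 : ∀ t x, 0 ≤ G t x) {K : Set X} (hK : IsCompact K) {φ : X → ℝ} (hφ : Continuous φ) :
    ∃ c : α → ℝ, Measurable c ∧
      ∀ t, (∃ u ∈ K, G t u = 0) → ∃ u ∈ K, G t u = 0 ∧ φ u = c t :=
  ⟨fun t => ⨆ n : ℕ, ⨅ x : K, (φ x + n * G t x),
    .iSup fun _ => measurable_iInf_of_caratheodory (fun x => (hm x).const_mul _ |>.const_add _)
      (fun t => hφ.add (continuous_const.mul (hc t))) K,
    fun t hZ => hK.exists_zero_eq_iSup_penalty hφ (hc t) (hG0 t) hZ⟩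

theorem measurable_infDist_of_measurable_multifunction [PseudoMetricSpace X] {U : α → Set X}
    (hU : ∀ O : Set X, IsOpen O → MeasurableSet {t | (U t ∩ O).Nonempty})
    (hne : ∀ t, (U t).Nonempty) (u : X) : Measurable fun t => Metric.infDist u (U t) := by
  refine measurable_of_Iio fun a => ?_
  convert hU _ (Metric.isOpen_ball (x := u) (ε := a)) using 1
  ext t
  simp [Metric.infDist_lt_iff (hne t), dist_comm, Set.Nonempty, and_comm]

end Caratheodory

section EuclideanSelection

variable {α ι : Type*} [MeasurableSpace α] [Fintype ι] {G : α → EuclideanSpace ℝ ι → ℝ}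

theorem exists_measurable_coords_on_zeros (hm : ∀ x, Measurable fun t => G t x)
    (hc : ∀ t, Continuous (G t)) (hG0 : ∀ t x, 0 ≤ G t x) {K : Set (EuclideanSpace ℝ ι)}
    (hK : IsCompact K) (s : Finset ι) :
    ∃ c : α → ι → ℝ, Measurable c ∧
      ∀ t, (∃ u ∈ K, G t u = 0) → ∃ u ∈ K, G t u = 0 ∧ ∀ j ∈ s, u j = c t j := by
  classical
  induction s using Finset.induction_on generalizing G with
  | empty => exact ⟨0, measurable_const, fun t ⟨u, huK, hu⟩ => ⟨u, huK, hu, by simp⟩⟩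
  | insert a s _ ih =>
    have hproj := (EuclideanSpace.proj (𝕜 := ℝ) (ι := ι) a).continuous
    obtain ⟨ca, hcam, hca⟩ := exists_measurable_eq_on_zeros hm hc hG0 hK hproj
    obtain ⟨c, hcm, hcs⟩ := ih (G := fun t u => G t u + |u a - ca t|)
      (fun u => (hm u).add (measurable_const.sub hcam).abs)
      (fun t => (hc t).add (hproj.sub continuous_const).abs)
      (fun t u => add_nonneg (hG0 t u) (abs_nonneg _))
    refine ⟨fun t => Function.update (c t) a (ca t), ?_, fun t hZ => ?_⟩
    · refine measurable_pi_lambda _ fun j => ?_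
      rcases eq_or_ne j a with rfl | hj
      · simpa using hcam
      · simpa [hj] using measurable_pi_iff.1 hcm j
    obtain ⟨u₀, hu₀K, hu₀, hu₀a⟩ := hca t hZ
    obtain ⟨u, huK, hu, hus⟩ := hcs t ⟨u₀, hu₀K, by simp [hu₀, ← hu₀a]⟩
    have hGu : G t u = 0 := by linarith [hG0 t u, abs_nonneg (u a - ca t)]
    rw [hGu, zero_add, abs_eq_zero, sub_eq_zero] at hu
    refine ⟨u, huK, hGu, fun j hj => ?_⟩
    rcases eq_or_ne j a with rfl | hja
    · simpa using hu
    · simpa [hja] using hus j ((Finset.mem_insert.1 hj).resolve_left hja)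

theorem exists_measurable_zero_of_isCompact (hm : ∀ x, Measurable fun t => G t x)
    (hc : ∀ t, Continuous (G t)) (hG0 : ∀ t x, 0 ≤ G t x) {K : Set (EuclideanSpace ℝ ι)}
    (hK : IsCompact K) :
    ∃ sel : α → EuclideanSpace ℝ ι, Measurable sel ∧
      ∀ t, (∃ u ∈ K, G t u = 0) → sel t ∈ K ∧ G t (sel t) = 0 := by
  obtain ⟨c, hcm, hc⟩ := exists_measurable_coords_on_zeros hm hc hG0 hK Finset.univ
  refine ⟨fun t => WithLp.toLp 2 (c t), (PiLp.continuous_toLp 2 _).measurable.comp hcm,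
    fun t hZ => ?_⟩
  obtain ⟨u, huK, hu, huc⟩ := hc t hZ
  obtain rfl : u = WithLp.toLp 2 (c t) := by ext j; simpa using huc j (Finset.mem_univ j)
  exact ⟨huK, hu⟩

theorem exists_measurable_zero (hm : ∀ x, Measurable fun t => G t x)
    (hc : ∀ t, Continuous (G t)) (hG0 : ∀ t x, 0 ≤ G t x) :
    ∃ sel : α → EuclideanSpace ℝ ι, Measurable sel ∧
      ∀ t, (∃ u, G t u = 0) → G t (sel t) = 0 := by
  classical
  choose sel hselm hsel using fun m : ℕ =>
    exists_measurable_zero_of_isCompact hm hc hG0 (isCompact_closedBall 0 (m : ℝ))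
  set T : ℕ → Set α := fun m => {t | G t (sel m t) = 0}
  have hT : ∀ m, MeasurableSet (T m) := fun m =>
    measurable_comp_of_caratheodory hm hc (hselm m) (measurableSet_singleton 0)
  have hex : ∀ t, ∃ m, t ∈ T m ∨ t ∉ ⋃ m, T m := fun t => by
    by_cases ht : t ∈ ⋃ m, T m
    · exact (mem_iUnion.1 ht).imp fun _ => .inl
    · exact ⟨0, .inr ht⟩
  refine ⟨fun t => sel (Nat.find (hex t)) t, Measurable.find hselm
    (p := fun m t => t ∈ T m ∨ t ∉ ⋃ m, T m) (fun m => (hT m).union (.compl (.iUnion hT))) hex,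
    fun t ⟨u, hu⟩ => ?_⟩
  obtain ⟨m, hum⟩ := exists_nat_ge ‖u‖
  have ht : t ∈ ⋃ m, T m :=
    mem_iUnion.2 ⟨m, (hsel m t ⟨u, mem_closedBall_zero_iff.2 hum, hu⟩).2⟩
  exact (Nat.find_spec (hex t)).resolve_right (not_not.2 ht)

end EuclideanSelection

theorem aemeasurable_restrict_Ici {β : Type*} [MeasurableSpace β] {f : ℝ → β} {a : ℝ}
    (h : ∀ b, a ≤ b → AEMeasurable f (volume.restrict (Icc a b))) :
    AEMeasurable f (volume.restrict (Ici a)) := by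
  have : Ici a = ⋃ n : ℕ, Icc a (a + n) := by
    ext s
    simp only [mem_Ici, mem_iUnion, mem_Icc]
    exact ⟨fun hs => (exists_nat_ge (s - a)).imp fun n hn => ⟨hs, by linarith⟩,
      fun ⟨_, hs, _⟩ => hs⟩
  rw [this, aemeasurable_iUnion_iff]
  exact fun n => h _ (le_add_of_nonneg_right n.cast_nonneg)

namespace HJB

variable {N M : ℕ}

theorem coe_neg_le_conj (h : Euc N → ℝ) (v : Euc N) : ((-h 0 : ℝ) : EReal) ≤ conj h v := by
  simpa [conj] using le_iSup (fun p : Euc N => (((inner ℝ v p : ℝ) - h p : ℝ) : EReal)) 0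

theorem conj_ne_bot (h : Euc N → ℝ) (v : Euc N) : conj h v ≠ ⊥ :=
  ne_bot_of_le_ne_bot (EReal.coe_ne_bot _) (coe_neg_le_conj h v)

theorem conj_eq_iSup_denseRange {h : Euc N → ℝ} (hc : Continuous h) {d : ℕ → Euc N}
    (hd : DenseRange d) (v : Euc N) :
    conj h v = ⨆ k, (((inner ℝ v (d k) : ℝ) - h (d k) : ℝ) : EReal) :=
  (hd.ciSup' (f := fun p => (((inner ℝ v p : ℝ) - h p : ℝ) : EReal))
    (continuous_coe_real_ereal.comp ((continuous_const.inner continuous_id).sub hc))).symm.trans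
    (rangeFactorization_surjective.iSup_comp fun s : range d =>
      (((inner ℝ v s.1 : ℝ) - h s.1 : ℝ) : EReal)).symm

theorem aemeasurable_Hstar {H : ℝ → Euc N → Euc N → ℝ}
    (hHmeas : ∀ x p, Measurable fun t => H t x p) (hHcont : ∀ t p, Continuous fun x => H t x p)
    (hHconv : ∀ t x, ConvexOn ℝ univ (H t x)) {μ : Measure ℝ} {x v : ℝ → Euc N}
    (hx : AEMeasurable x μ) (hv : AEMeasurable v μ) :
    AEMeasurable (fun t => Hstar H t (x t) (v t)) μ := by
  obtain ⟨d, hd⟩ := exists_dense_seq (Euc N)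
  have hconj : ∀ t, Hstar H t (x t) (v t) =
      ⨆ k, (((inner ℝ (v t) (d k) : ℝ) - H t (x t) (d k) : ℝ) : EReal) := fun t =>
    conj_eq_iSup_denseRange (continuousOn_univ.1 ((hHconv t (x t)).continuousOn isOpen_univ))
      hd (v t)
  simp_rw [hconj]
  exact .iSup fun k => ((hv.inner_const).sub
    (aemeasurable_comp_of_caratheodory (fun y => hHmeas y (d k)) (fun t => hHcont t (d k)) hx)
    ).coe_real_ereal

theorem IsTrajOn.aemeasurable_deriv {x dx : ℝ → Euc N} {t₀ : ℝ} (h : IsTrajOn x dx t₀) :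
    AEMeasurable dx (volume.restrict (Ici t₀)) :=
  aemeasurable_restrict_Ici fun b _ => (h.1 b).aemeasurable

theorem IsTrajOn.aemeasurable {x dx : ℝ → Euc N} {t₀ : ℝ} (h : IsTrajOn x dx t₀) :
    AEMeasurable x (volume.restrict (Ici t₀)) := by
  refine aemeasurable_restrict_Ici fun b hb => ?_
  have hprim : ContinuousOn (fun t => x t₀ + ∫ s in t₀..t, dx s) (Icc t₀ b) := by
    rw [← uIcc_of_le hb]
    exact continuousOn_const.add
      (intervalIntegral.continuousOn_primitive_interval ((uIcc_of_le hb).symm ▸ h.1 b))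
  refine (hprim.aemeasurable measurableSet_Icc).congr ?_
  filter_upwards [ae_restrict_mem measurableSet_Icc] with t ht using (h.2 t ht.1).symm

variable {U : ℝ → Set (Euc M)} {f : ℝ → Euc N → Euc M → Euc N}
  {l : ℝ → Euc N → Euc M → ℝ} {A : Set (Euc N)} {H : ℝ → Euc N → Euc N → ℝ} {t₀ : ℝ}
  {x₀ : Euc N}

theorem integrableOn_of_trajCost_ne_top {p : (ℝ → Euc N) × (ℝ → Euc N)}
    (h : trajCost H t₀ p ≠ ⊤) :
    IntegrableOn (fun t => (Hstar H t (p.1 t) (p.2 t)).toReal) (Ici t₀) := by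
  by_contra hint
  exact h (by simp [trajCost, hint])

theorem Hstar_le_of_mem {t : ℝ} {x : Euc N} (hepi : flimg U f l t x ⊆ epiConj (H t x))
    {u : Euc M} (hu : u ∈ U t) : Hstar H t x (f t x u) ≤ (l t x u : EReal) := by
  have hmem : (f t x u, l t x u) ∈ flimg U f l t x := ⟨u, hu, rfl⟩
  simpa only [epiConj, mem_ofPred_eq, Hstar] using hepi hmem

theorem mem_SH_of_mem_Sf (hepi : ∀ t x, flimg U f l t x ⊆ epiConj (H t x))
    {z : (ℝ → Euc N) × (ℝ → Euc M)} (hz : z ∈ Sf U f A t₀ x₀) :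
    (z.1, fun s => f s (z.1 s) (z.2 s)) ∈ SH H A t₀ x₀ := by
  obtain ⟨-, hzU, hint, hz0, hzA, hzeq⟩ := hz
  refine ⟨⟨hint, fun t ht => by rw [hzeq t ht, hz0]⟩, hz0, hzA, ?_⟩
  exact hzU.mono fun t ht =>
    ne_top_of_le_ne_top (EReal.coe_ne_top _) (Hstar_le_of_mem (hepi t (z.1 t)) ht)

theorem trajCost_le_ctrlCost {φ : ℝ → ℝ} (hHmeas : ∀ x p, Measurable fun t => H t x p)
    (hHcont : ∀ t p, Continuous fun x => H t x p) (hHconv : ∀ t x, ConvexOn ℝ univ (H t x))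
    (hφ : MemL1 φ) (hH2 : ∀ t, 0 ≤ t → ∀ x, H t x 0 ≤ -φ t)
    (hepi : ∀ t x, flimg U f l t x ⊆ epiConj (H t x)) (ht₀ : 0 ≤ t₀)
    {z : (ℝ → Euc N) × (ℝ → Euc M)} (hz : z ∈ Sf U f A t₀ x₀) :
    trajCost H t₀ (z.1, fun s => f s (z.1 s) (z.2 s)) ≤ ctrlCost l t₀ z := by
  by_cases hl : IntegrableOn (fun t => l t (z.1 t) (z.2 t)) (Ici t₀)
  swap
  · simp [ctrlCost, hl]
  have hSH := mem_SH_of_mem_Sf hepi hz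
  set g := fun t => (Hstar H t (z.1 t) (f t (z.1 t) (z.2 t))).toReal
  have hbounds : ∀ᵐ t ∂(volume.restrict (Ici t₀)), φ t ≤ g t ∧ g t ≤ l t (z.1 t) (z.2 t) := by
    filter_upwards [ae_restrict_mem measurableSet_Ici, hz.2.1, hSH.2.2.2] with t ht htU htop
    have hbot := conj_ne_bot (H t (z.1 t)) (f t (z.1 t) (z.2 t))
    refine ⟨?_, EReal.toReal_le_toReal (Hstar_le_of_mem (hepi t (z.1 t)) htU) hbot
      (EReal.coe_ne_top _)⟩
    refine le_trans ?_ (EReal.toReal_le_toReal (coe_neg_le_conj _ _) (EReal.coe_ne_bot _) htop)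
    simpa using le_neg_of_le_neg (hH2 t (ht₀.trans ht) (z.1 t))
  have hg : IntegrableOn g (Ici t₀) :=
    integrable_of_le_of_le (aemeasurable_Hstar hHmeas hHcont hHconv hSH.1.aemeasurable
      hSH.1.aemeasurable_deriv).ereal_toReal.aestronglyMeasurable
      (hbounds.mono fun _ h => h.1) (hbounds.mono fun _ h => h.2)
      (hφ.mono_set (Ici_subset_Ici.2 ht₀)) hl
  rw [trajCost, if_pos ⟨hSH.2.2.2, hg⟩, ctrlCost, if_pos hl, EReal.coe_le_coe_iff]
  exact integral_mono_ae hg hl (hbounds.mono fun _ h => h.2)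

theorem valueV_le_ctrlCost {φ : ℝ → ℝ} (hHmeas : ∀ x p, Measurable fun t => H t x p)
    (hHcont : ∀ t p, Continuous fun x => H t x p) (hHconv : ∀ t x, ConvexOn ℝ univ (H t x))
    (hφ : MemL1 φ) (hH2 : ∀ t, 0 ≤ t → ∀ x, H t x 0 ≤ -φ t)
    (hepi : ∀ t x, flimg U f l t x ⊆ epiConj (H t x)) (ht₀ : 0 ≤ t₀)
    {z : (ℝ → Euc N) × (ℝ → Euc M)} (hz : z ∈ Sf U f A t₀ x₀) :
    valueV H A t₀ x₀ ≤ ctrlCost l t₀ z :=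
  (sInf_le (mem_image_of_mem _ (mem_SH_of_mem_Sf hepi hz))).trans
    (trajCost_le_ctrlCost hHmeas hHcont hHconv hφ hH2 hepi ht₀ hz)

theorem exists_measurable_control
    (hUmeas : ∀ O : Set (Euc M), IsOpen O → MeasurableSet {t : ℝ | (U t ∩ O).Nonempty})
    (hUne : ∀ t, (U t).Nonempty ∧ IsClosed (U t))
    (hfmeas : ∀ x u, Measurable fun t => f t x u) (hlmeas : ∀ x u, Measurable fun t => l t x u)
    (hfcont : ∀ t, Continuous fun z : Euc N × Euc M => f t z.1 z.2)
    (hlcont : ∀ t, Continuous fun z : Euc N × Euc M => l t z.1 z.2)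
    {X V : ℝ → Euc N} {g : ℝ → ℝ} (hX : Measurable X) (hV : Measurable V) (hg : Measurable g) :
    ∃ u : ℝ → Euc M, Measurable u ∧ ∀ t, (∃ w ∈ U t, f t (X t) w = V t ∧ l t (X t) w = g t) →
      u t ∈ U t ∧ f t (X t) (u t) = V t ∧ l t (X t) (u t) = g t := by
  set G : ℝ → Euc M → ℝ := fun t w =>
    ‖f t (X t) w - V t‖ + |l t (X t) w - g t| + Metric.infDist w (U t)
  have hG0 : ∀ t w, G t w = 0 ↔ w ∈ U t ∧ f t (X t) w = V t ∧ l t (X t) w = g t := by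
    intro t w
    rw [add_eq_zero_iff_of_nonneg (by positivity) Metric.infDist_nonneg,
      add_eq_zero_iff_of_nonneg (by positivity) (by positivity), norm_eq_zero, abs_eq_zero,
      sub_eq_zero, sub_eq_zero, ← (hUne t).2.mem_iff_infDist_zero (hUne t).1]
    tauto
  have hGm : ∀ w, Measurable fun t => G t w := fun w =>
    (((measurable_comp_of_caratheodory (fun x => hfmeas x w)
      (fun t => (hfcont t).comp (continuous_id.prodMk continuous_const)) hX).sub hV).norm.add
    ((measurable_comp_of_caratheodory (fun x => hlmeas x w)
      (fun t => (hlcont t).comp (continuous_id.prodMk continuous_const)) hX).sub hg).abs).add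
    (measurable_infDist_of_measurable_multifunction hUmeas (fun t => (hUne t).1) w)
  have hGc : ∀ t, Continuous (G t) := fun t =>
    ((((hfcont t).comp (continuous_const.prodMk continuous_id)).sub continuous_const).norm.add
      (((hlcont t).comp (continuous_const.prodMk continuous_id)).sub continuous_const).abs).add
    (Metric.continuous_infDist_pt _)
  obtain ⟨u, hum, hu⟩ :=
    exists_measurable_zero hGm hGc fun t w => add_nonneg (by positivity) Metric.infDist_nonneg
  exact ⟨u, hum, fun t ⟨w, hw⟩ => (hG0 t (u t)).1 (hu t ⟨w, (hG0 t w).2 hw⟩)⟩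

theorem exists_mem_Sf_ctrlCost_eq_trajCost
    (hUmeas : ∀ O : Set (Euc M), IsOpen O → MeasurableSet {t : ℝ | (U t ∩ O).Nonempty})
    (hUne : ∀ t, (U t).Nonempty ∧ IsClosed (U t))
    (hHmeas : ∀ x p, Measurable fun t => H t x p) (hHcont : ∀ t p, Continuous fun x => H t x p)
    (hHconv : ∀ t x, ConvexOn ℝ univ (H t x))
    (hfmeas : ∀ x u, Measurable fun t => f t x u) (hlmeas : ∀ x u, Measurable fun t => l t x u)
    (hfcont : ∀ t, Continuous fun z : Euc N × Euc M => f t z.1 z.2)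
    (hlcont : ∀ t, Continuous fun z : Euc N × Euc M => l t z.1 z.2)
    (hgph : ∀ t x, gphConj (H t x) ⊆ flimg U f l t x)
    {p : (ℝ → Euc N) × (ℝ → Euc N)} (hp : p ∈ SH H A t₀ x₀)
    (hint : IntegrableOn (fun t => (Hstar H t (p.1 t) (p.2 t)).toReal) (Ici t₀)) :
    ∃ u : ℝ → Euc M, (p.1, u) ∈ Sf U f A t₀ x₀ ∧ ctrlCost l t₀ (p.1, u) = trajCost H t₀ p := by
  obtain ⟨htraj, hp0, hpA, htop⟩ := hp
  set g := fun t => (Hstar H t (p.1 t) (p.2 t)).toReal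
  have hxm := htraj.aemeasurable
  have hvm := htraj.aemeasurable_deriv
  have hgm : AEMeasurable g (volume.restrict (Ici t₀)) :=
    (aemeasurable_Hstar hHmeas hHcont hHconv hxm hvm).ereal_toReal
  obtain ⟨u, hum, hu⟩ := exists_measurable_control hUmeas hUne hfmeas hlmeas hfcont hlcont
    hxm.measurable_mk hvm.measurable_mk hgm.measurable_mk
  have hgood : ∀ᵐ t ∂(volume.restrict (Ici t₀)),
      u t ∈ U t ∧ f t (p.1 t) (u t) = p.2 t ∧ l t (p.1 t) (u t) = g t := by
    filter_upwards [hxm.ae_eq_mk, hvm.ae_eq_mk, hgm.ae_eq_mk, htop] with t hx hv hg ht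
    have hgph' : (p.2 t, g t) ∈ gphConj (H t (p.1 t)) :=
      (EReal.coe_toReal ht (conj_ne_bot _ _)).symm
    obtain ⟨w, hw, hfl⟩ := hgph t (p.1 t) hgph'
    rw [hx, hv, hg] at hfl ⊢
    exact hu t ⟨w, hw, Prod.ext_iff.1 hfl⟩
  have hl : IntegrableOn (fun t => l t (p.1 t) (u t)) (Ici t₀) :=
    hint.congr (hgood.mono fun _ h => h.2.2.symm)
  refine ⟨u, ⟨hum, hgood.mono fun _ h => h.1, fun b => ?_, hp0, hpA, fun t ht => ?_⟩, ?_⟩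
  · refine (htraj.1 b).congr ?_
    filter_upwards [ae_restrict_of_ae_restrict_of_subset Icc_subset_Ici_self hgood]
      with t h using h.2.1.symm
  · rw [htraj.2 t ht, hp0]
    congr 1
    refine intervalIntegral.integral_congr_ae ?_
    filter_upwards [(ae_restrict_iff' measurableSet_Ici).1 hgood] with s hs hsI
    exact (hs (uIoc_of_le ht ▸ hsI).1.le).2.1.symm
  · rw [ctrlCost, if_pos hl, trajCost, if_pos ⟨htop, hint⟩]
    exact congrArg _ (integral_congr_ae (hgood.mono fun _ h => h.2.2))

theorem valueVc_le_trajCost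
    (hUmeas : ∀ O : Set (Euc M), IsOpen O → MeasurableSet {t : ℝ | (U t ∩ O).Nonempty})
    (hUne : ∀ t, (U t).Nonempty ∧ IsClosed (U t))
    (hHmeas : ∀ x p, Measurable fun t => H t x p) (hHcont : ∀ t p, Continuous fun x => H t x p)
    (hHconv : ∀ t x, ConvexOn ℝ univ (H t x))
    (hfmeas : ∀ x u, Measurable fun t => f t x u) (hlmeas : ∀ x u, Measurable fun t => l t x u)
    (hfcont : ∀ t, Continuous fun z : Euc N × Euc M => f t z.1 z.2)
    (hlcont : ∀ t, Continuous fun z : Euc N × Euc M => l t z.1 z.2)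
    (hgph : ∀ t x, gphConj (H t x) ⊆ flimg U f l t x)
    {p : (ℝ → Euc N) × (ℝ → Euc N)} (hp : p ∈ SH H A t₀ x₀) :
    valueVc U f l A t₀ x₀ ≤ trajCost H t₀ p := by
  by_cases hfin : trajCost H t₀ p = ⊤
  · exact hfin ▸ le_top
  obtain ⟨u, hu, hcost⟩ := exists_mem_Sf_ctrlCost_eq_trajCost hUmeas hUne hHmeas hHcont hHconv
    hfmeas hlmeas hfcont hlcont hgph hp (integrableOn_of_trajCost_ne_top hfin)
  exact hcost ▸ sInf_le (mem_image_of_mem _ hu)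

theorem stmt_8_general {N M : ℕ} (U : ℝ → Set (Euc M)) (f : ℝ → Euc N → Euc M → Euc N)
    (l : ℝ → Euc N → Euc M → ℝ) (A : Set (Euc N))
    (H : ℝ → Euc N → Euc N → ℝ) (φ : ℝ → ℝ)
    (hUmeas : ∀ O : Set (Euc M), IsOpen O →
      MeasurableSet {t : ℝ | (U t ∩ O).Nonempty})
    (hUne : ∀ t, (U t).Nonempty ∧ IsClosed (U t))
    (hHmeas : ∀ x p, Measurable fun t => H t x p)
    (hHcont : ∀ t p, Continuous fun x => H t x p)
    (hHconv : ∀ t x, ConvexOn ℝ univ (H t x))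
    (hφ : MemL1 φ) (hH2 : ∀ t, 0 ≤ t → ∀ x, H t x 0 ≤ -φ t)
    (hfmeas : ∀ x u, Measurable fun t => f t x u)
    (hlmeas : ∀ x u, Measurable fun t => l t x u)
    (hfcont : ∀ t, Continuous fun z : Euc N × Euc M => f t z.1 z.2)
    (hlcont : ∀ t, Continuous fun z : Euc N × Euc M => l t z.1 z.2)
    -- ... which is epigraphical
    (hepi : ∀ t x, gphConj (H t x) ⊆ flimg U f l t x ∧
      flimg U f l t x ⊆ epiConj (H t x)) :
    (∀ t₀, 0 ≤ t₀ → ∀ x₀ ∈ A,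
      valueV H A t₀ x₀ = valueVc U f l A t₀ x₀) ∧
    (∀ t₀, 0 ≤ t₀ → ∀ x₀ ∈ A, valueV H A t₀ x₀ ≠ ⊤ →
      -- optimal trajectory of V gives an optimal pair of 𝒱
      (∀ p ∈ SH H A t₀ x₀, trajCost H t₀ p = valueV H A t₀ x₀ →
        ∃ u : ℝ → Euc M, (p.1, u) ∈ Sf U f A t₀ x₀ ∧
          ctrlCost l t₀ (p.1, u) = valueVc U f l A t₀ x₀) ∧
      -- optimal pair of 𝒱 gives an optimal trajectory of V
      (∀ z ∈ Sf U f A t₀ x₀, ctrlCost l t₀ z = valueVc U f l A t₀ x₀ →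
        ∃ dx : ℝ → Euc N, (z.1, dx) ∈ SH H A t₀ x₀ ∧
          trajCost H t₀ (z.1, dx) = valueV H A t₀ x₀)) := by
  have hgph t x := (hepi t x).1
  have hflimg t x := (hepi t x).2
  have hV : ∀ t₀, 0 ≤ t₀ → ∀ x₀, valueV H A t₀ x₀ = valueVc U f l A t₀ x₀ :=
    fun t₀ ht₀ x₀ => le_antisymm
      (le_sInf <| forall_mem_image.2 fun z hz =>
        valueV_le_ctrlCost hHmeas hHcont hHconv hφ hH2 hflimg ht₀ hz)
      (le_sInf <| forall_mem_image.2 fun p hp =>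
        valueVc_le_trajCost hUmeas hUne hHmeas hHcont hHconv hfmeas hlmeas hfcont hlcont hgph hp)
  refine ⟨fun t₀ ht₀ x₀ _ => hV t₀ ht₀ x₀, fun t₀ ht₀ x₀ _ hVne => ⟨fun p hp hopt => ?_,
    fun z hz hopt => ?_⟩⟩
  · obtain ⟨u, hu, hcost⟩ := exists_mem_Sf_ctrlCost_eq_trajCost hUmeas hUne hHmeas hHcont
      hHconv hfmeas hlmeas hfcont hlcont hgph hp (integrableOn_of_trajCost_ne_top (hopt ▸ hVne))
    exact ⟨u, hu, by rw [hcost, hopt, hV t₀ ht₀ x₀]⟩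
  · have hSH := mem_SH_of_mem_Sf hflimg hz
    refine ⟨_, hSH, le_antisymm ?_ (sInf_le (mem_image_of_mem _ hSH))⟩
    rw [hV t₀ ht₀ x₀, ← hopt]
    exact trajCost_le_ctrlCost hHmeas hHcont hHconv hφ hH2 hflimg ht₀ hz

/-- Theorem `eqw-fws`. If `(U,f,l)` is an epigraphical
representation of `H` (with the stated regularity), then `V = 𝒱` on `[0,∞) × A`,
optimal trajectories of `V` yield optimal pairs of `𝒱` and conversely. -/
theorem stmt_8 {N M : ℕ} (U : ℝ → Set (Euc M)) (f : ℝ → Euc N → Euc M → Euc N)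
    (l : ℝ → Euc N → Euc M → ℝ) (A : Set (Euc N))
    (H : ℝ → Euc N → Euc N → ℝ) (φ : ℝ → ℝ)
    (hA : A.Nonempty) (hAcl : IsClosed A)
    (hUmeas : ∀ O : Set (Euc M), IsOpen O →
      MeasurableSet {t : ℝ | (U t ∩ O).Nonempty})
    (hUne : ∀ t, (U t).Nonempty ∧ IsClosed (U t))
    (hHmeas : ∀ x p, Measurable fun t => H t x p)
    (hHcont : ∀ t p, Continuous fun x => H t x p)
    (hHconv : ∀ t x, ConvexOn ℝ univ (H t x))
    (hφ : MemL1 φ) (hH2 : ∀ t, 0 ≤ t → ∀ x, H t x 0 ≤ -φ t)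
    (hfmeas : ∀ x u, Measurable fun t => f t x u)
    (hlmeas : ∀ x u, Measurable fun t => l t x u)
    (hfcont : ∀ t, Continuous fun z : Euc N × Euc M => f t z.1 z.2)
    (hlcont : ∀ t, Continuous fun z : Euc N × Euc M => l t z.1 z.2)
    (hlφ : ∀ t, 0 ≤ t → ∀ x u, φ t ≤ l t x u)
    -- (U,f,l) is a representation of H ...
    (hrep : ∀ t x p, IsLUB
      {r : ℝ | ∃ u ∈ U t, r = (inner ℝ p (f t x u) : ℝ) - l t x u} (H t x p))
    -- ... which is epigraphical
    (hepi : ∀ t x, gphConj (H t x) ⊆ flimg U f l t x ∧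
      flimg U f l t x ⊆ epiConj (H t x)) :
    (∀ t₀, 0 ≤ t₀ → ∀ x₀ ∈ A,
      valueV H A t₀ x₀ = valueVc U f l A t₀ x₀) ∧
    (∀ t₀, 0 ≤ t₀ → ∀ x₀ ∈ A, valueV H A t₀ x₀ ≠ ⊤ →
      -- optimal trajectory of V gives an optimal pair of 𝒱
      (∀ p ∈ SH H A t₀ x₀, trajCost H t₀ p = valueV H A t₀ x₀ →
        ∃ u : ℝ → Euc M, (p.1, u) ∈ Sf U f A t₀ x₀ ∧
          ctrlCost l t₀ (p.1, u) = valueVc U f l A t₀ x₀) ∧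
      -- optimal pair of 𝒱 gives an optimal trajectory of V
      (∀ z ∈ Sf U f A t₀ x₀, ctrlCost l t₀ z = valueVc U f l A t₀ x₀ →
        ∃ dx : ℝ → Euc N, (z.1, dx) ∈ SH H A t₀ x₀ ∧
          trajCost H t₀ (z.1, dx) = valueV H A t₀ x₀)) :=
  stmt_8_general U f l A H φ hUmeas hUne hHmeas hHcont hHconv hφ hH2 hfmeas hlmeas hfcont hlcont
    hepi

end HJB
end
end
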